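/- The bivariate generating function over parking functions satisfies: sum over π ∈ PF(m,n) of x^{slev(π)} y^{lel(π)} = (n-m+1)xy[(m-1)((n-m+1)x + y + m - 1)^{m-2} + (xy + (n-m)x + 1)(xy + (n-m)x + m)^{m-2}]. -/

import Mathlib

/-!
Split the `n` spots into the first `K = n - m + 1` and the last `M = m - 1`. A parking function
is the same as the set `S` of cars preferring one of the first `K` spots, an arbitrary map from
`S` to those spots, and a parking function of the remaining cars on the last `M` spots. Summing
over `S`, with `S` split according to whether it contains car `0`, expresses the generating
function through the number of parking functions and the `lel`-generating function
`(M + 1 - r) y (y + M) ^ (r - 1)` of `PF(r, M)`. The latter is proved by induction along the same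
recursion at `x = 1`, and two binomial identities then give the closed form.
-/

/-- The finite set of parking functions `PF(m,n)`, encoded as functions
`Fin m → Fin n`, where the preferred spot of car `k` is `(π k : ℕ) + 1 ∈ {1,…,n}`. -/
def pf (m n : ℕ) : Finset (Fin m → Fin n) :=
  Finset.univ.filter (fun π =>
    ∀ i, i ≤ n → m + i ≤ (Finset.univ.filter (fun k => (π k : ℕ) + 1 ≤ i)).card + n)

open Finset

section Binomial

variable {R : Type*} [CommSemiring R]

theorem sum_range_choose_mul_mul_pow_mul_pow (N : ℕ) (a b : R) :
    ∑ t ∈ range (N + 1), (N.choose t * t : R) * a ^ t * b ^ (N - t) =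
      N * a * (a + b) ^ (N - 1) := by
  cases N with
  | zero => simp
  | succ N =>
    rw [sum_range_succ', add_pow, mul_sum]
    simp only [Nat.cast_zero, mul_zero, zero_mul, add_zero, Nat.add_sub_cancel,
      Nat.add_sub_add_right]
    refine sum_congr rfl fun t _ => ?_
    have h : (((N + 1).choose (t + 1) * (t + 1) : ℕ) : R) = ((N + 1) * N.choose t : ℕ) := by
      rw [Nat.add_one_mul_choose_eq]
    push_cast at h ⊢
    rw [h, pow_succ]
    ring

theorem sum_range_choose_mul_succ_mul_pow_mul_pow (N : ℕ) (a b : R) :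
    ∑ t ∈ range (N + 1), (N.choose t * (t + 1) : R) * a ^ t * b ^ (N - t) =
      N * a * (a + b) ^ (N - 1) + (a + b) ^ N := by
  rw [← sum_range_choose_mul_mul_pow_mul_pow, add_pow, ← sum_add_distrib]
  exact sum_congr rfl fun t _ => by ring

end Binomial

section Occupancy

variable {R : Type*} [CommRing R] {α β : Type*} [Fintype α] [DecidableEq α] [Fintype β]
  [DecidableEq β]

theorem sum_pow_card_filter_eq_const (c : β) (y : R) :
    ∑ w : α → β, y ^ #{j | w j = c} = (y + Fintype.card β - 1) ^ Fintype.card α := by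
  have hfactor : ∑ b : β, (if b = c then y else 1) = y + Fintype.card β - 1 := by
    rw [sum_ite, sum_const, sum_const, filter_eq', if_pos (mem_univ c), filter_ne',
      card_erase_of_mem (mem_univ c), card_univ, card_singleton, one_smul, nsmul_one,
      Nat.cast_pred (Fintype.card_pos_iff.2 ⟨c⟩)]
    ring
  calc ∑ w : α → β, y ^ #{j | w j = c} = ∑ w : α → β, ∏ j, if w j = c then y else 1 := by
        simp [prod_ite]
    _ = ∏ _j : α, ∑ b : β, if b = c then y else 1 :=
        (Fintype.prod_sum fun (_ : α) (b : β) => if b = c then y else 1).symm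
    _ = _ := by rw [hfactor, prod_const, card_univ]

theorem sum_pow_card_filter_eq_apply (j₀ : α) (y : R) :
    ∑ v : α → β, y ^ #{j | v j = v j₀} =
      Fintype.card β * y * (y + Fintype.card β - 1) ^ (Fintype.card α - 1) := by
  have hsplit : ∀ v : α → β,
      y ^ #{j | v j = v j₀} = y * y ^ #{j : {j // j ≠ j₀} | v j = v j₀} := by
    intro v
    rw [card_filter, card_filter, Fintype.sum_eq_add_sum_subtype_ne _ j₀, if_pos rfl, pow_add,
      pow_one]
  rw [Fintype.sum_equiv (Equiv.funSplitAt j₀ β) _ (fun p => y * y ^ #{j | p.2 j = p.1}) hsplit,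
    Fintype.sum_prod_type]
  simp_rw [← mul_sum, sum_pow_card_filter_eq_const, sum_const, card_univ, nsmul_eq_mul]
  rw [Fintype.card_subtype_compl, Fintype.card_subtype_eq]
  ring

end Occupancy

def parkingFunctions (ι : Type*) [Fintype ι] [DecidableEq ι] (n : ℕ) : Finset (ι → Fin n) :=
  {π | ∀ i ≤ n, Fintype.card ι + i ≤ #{k | (π k : ℕ) < i} + n}

section ParkingFunctions

variable {ι : Type*} [Fintype ι] [DecidableEq ι]

@[simp]
theorem mem_parkingFunctions {n : ℕ} {π : ι → Fin n} :
    π ∈ parkingFunctions ι n ↔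
      ∀ i ≤ n, Fintype.card ι + i ≤ #{k | (π k : ℕ) < i} + n := by
  simp [parkingFunctions]

theorem parkingFunctions_eq_empty {n : ℕ} (h : n < Fintype.card ι) :
    parkingFunctions ι n = ∅ :=
  eq_empty_of_forall_notMem fun π hπ => by
    have := mem_parkingFunctions.1 hπ 0 n.zero_le
    simp only [add_zero, not_lt_zero, filter_false, card_empty, zero_add] at this
    omega

theorem card_parkingFunctions_of_isEmpty [IsEmpty ι] (n : ℕ) : #(parkingFunctions ι n) = 1 := by
  rw [eq_univ_of_forall (s := parkingFunctions ι n) fun π => by simp, card_univ,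
    Fintype.card_unique]

variable {K M : ℕ} (S : Finset ι)

def glue (v : S → Fin K) (q : ↥Sᶜ → Fin M) (i : ι) : Fin (K + M) :=
  if h : i ∈ S then Fin.castAdd M (v ⟨i, h⟩) else Fin.natAdd K (q ⟨i, mem_compl.2 h⟩)

variable {S} (v : S → Fin K) (q : ↥Sᶜ → Fin M)

theorem card_filter_glue (p : Fin (K + M) → Prop) [DecidablePred p] :
    #{i | p (glue S v q i)} = #{j | p (Fin.castAdd M (v j))} + #{j | p (Fin.natAdd K (q j))} := by
  simp only [card_filter]
  rw [← sum_add_sum_compl S, ← sum_coe_sort S, ← sum_coe_sort Sᶜ]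
  congr 1 <;> refine sum_congr rfl fun j _ => ?_
  · simp [glue, j.2]
  · simp [glue, mem_compl.1 j.2]

theorem filter_glue_lt : ({i | (glue S v q i : ℕ) < K} : Finset ι) = S := by
  ext i
  rw [mem_filter]
  by_cases h : i ∈ S <;> simp [glue, h]

theorem glue_mem_parkingFunctions_iff (hι : Fintype.card ι ≤ M + 1) :
    glue S v q ∈ parkingFunctions ι (K + M) ↔ q ∈ parkingFunctions (↥Sᶜ) M := by
  have hcount (j : ℕ) : #{i | (glue S v q i : ℕ) < K + j} = #S + #{k | (q k : ℕ) < j} := by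
    rw [card_filter_glue v q fun a => (a : ℕ) < K + j, filter_true_of_mem fun k _ => by
      simp only [Fin.val_castAdd]; omega]
    simp
  have hcard : Fintype.card ↥Sᶜ + #S = Fintype.card ι := by
    rw [Fintype.card_coe, card_compl_add_card]
  simp only [mem_parkingFunctions]
  constructor
  · intro h j hj
    have := h (K + j) (by omega)
    rw [hcount] at this
    omega
  · intro h i hi
    rcases Nat.lt_or_ge i K with hiK | hiK
    · omega
    · obtain ⟨j, rfl⟩ := Nat.exists_eq_add_of_le hiK
      have := h j (by omega)
      rw [hcount]
      omega

theorem glue_injective :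
    Function.Injective fun p : (S → Fin K) × (↥Sᶜ → Fin M) => glue S p.1 p.2 := by
  rintro ⟨v, q⟩ ⟨v', q'⟩ h
  simp only [Prod.mk.injEq]
  constructor <;> funext j <;> have := congrFun h j
  · simpa [glue, j.2] using this
  · simpa [glue, mem_compl.1 j.2] using this

theorem exists_glue_eq {π : ι → Fin (K + M)} (hπ : ({i | (π i : ℕ) < K} : Finset ι) = S) :
    ∃ (v : S → Fin K) (q : ↥Sᶜ → Fin M), glue S v q = π := by
  have hS (i : ι) : i ∈ S ↔ (π i : ℕ) < K := by simp [← hπ]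
  refine ⟨fun j => ⟨π j, (hS j).1 j.2⟩, fun j => ⟨π j - K, ?_⟩, ?_⟩
  · have := (hS j).not.1 (mem_compl.1 j.2)
    omega
  · funext i
    ext
    by_cases h : i ∈ S
    · simp [glue, h]
    · have := (hS i).not.1 h
      simp only [glue, h, ↓reduceDIte, Fin.natAdd_mk]
      omega

theorem sum_parkingFunctions_eq_sum_glue {R : Type*} [AddCommMonoid R]
    (hι : Fintype.card ι ≤ M + 1) (f : (ι → Fin (K + M)) → R) :
    ∑ π ∈ parkingFunctions ι (K + M), f π =
      ∑ S : Finset ι, ∑ v : S → Fin K, ∑ q ∈ parkingFunctions (↥Sᶜ) M,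
        f (glue S v q) := by
  rw [← sum_fiberwise _ fun π => ({i | (π i : ℕ) < K} : Finset ι)]
  refine sum_congr rfl fun S _ => ?_
  rw [← sum_product', eq_comm]
  refine sum_nbij (fun p => glue S p.1 p.2) ?_ glue_injective.injOn ?_ fun _ _ => rfl
  · rintro ⟨v, q⟩ hvq
    simp only [mem_product, mem_univ, true_and] at hvq
    simp [glue_mem_parkingFunctions_iff v q hι, hvq, filter_glue_lt]
  · intro π hπ
    simp only [coe_filter] at hπ
    obtain ⟨v, q, rfl⟩ := exists_glue_eq hπ.2
    exact ⟨(v, q), by simpa [glue_mem_parkingFunctions_iff v q hι] using hπ.1, rfl⟩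

theorem card_filter_glue_eq_of_mem {i₀ : ι} (h : i₀ ∈ S) :
    #{i | glue S v q i = glue S v q i₀} = #{j | v j = v ⟨i₀, h⟩} := by
  rw [card_filter_glue v q fun a => a = glue S v q i₀, add_eq_left.2]
  · simp [glue, h]
  · simp only [glue, h, dite_true, card_eq_zero, filter_eq_empty_iff, Fin.ext_iff,
      Fin.val_natAdd, Fin.val_castAdd]
    omega

theorem card_filter_glue_eq_of_notMem {i₀ : ι} (h : i₀ ∉ S) :
    #{i | glue S v q i = glue S v q i₀} = #{j | q j = q ⟨i₀, mem_compl.2 h⟩} := by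
  rw [card_filter_glue v q fun a => a = glue S v q i₀, add_eq_right.2]
  · simp [glue, h]
  · simp only [glue, h, dite_false, card_eq_zero, filter_eq_empty_iff, Fin.ext_iff,
      Fin.val_natAdd, Fin.val_castAdd]
    omega

variable (S) (x y : ℚ) {i₀ : ι}

theorem sum_glue_of_mem (h : i₀ ∈ S) :
    ∑ v : S → Fin K, ∑ q ∈ parkingFunctions (↥Sᶜ) M,
        x ^ #{i | (glue S v q i : ℕ) < K} * y ^ #{i | glue S v q i = glue S v q i₀} =
      x ^ #S * (K * y * (y + K - 1) ^ (#S - 1)) * #(parkingFunctions (↥Sᶜ) M) := by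
  simp_rw [filter_glue_lt, card_filter_glue_eq_of_mem _ _ h, sum_const, nsmul_eq_mul, ← mul_sum]
  rw [sum_pow_card_filter_eq_apply, Fintype.card_fin, Fintype.card_coe]
  ring

theorem sum_glue_of_notMem (h : i₀ ∉ S) :
    ∑ v : S → Fin K, ∑ q ∈ parkingFunctions (↥Sᶜ) M,
        x ^ #{i | (glue S v q i : ℕ) < K} * y ^ #{i | glue S v q i = glue S v q i₀} =
      (K * x) ^ #S *
        ∑ q ∈ parkingFunctions (↥Sᶜ) M, y ^ #{j | q j = q ⟨i₀, mem_compl.2 h⟩} := by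
  simp_rw [filter_glue_lt, card_filter_glue_eq_of_notMem _ _ h, ← mul_sum, sum_const, card_univ,
    Fintype.card_fun, Fintype.card_coe, Fintype.card_fin, nsmul_eq_mul]
  push_cast
  ring

end ParkingFunctions

theorem sum_eq_sum_powerset_erase {ι R : Type*} [Fintype ι] [DecidableEq ι] [AddCommMonoid R]
    (a : ι) (f : Finset ι → R) :
    ∑ S, f S = ∑ T ∈ (univ.erase a).powerset, (f T + f (insert a T)) := by
  have h := sum_powerset_insert (notMem_erase a univ) f
  rw [insert_erase (mem_univ a), powerset_univ] at h
  rw [h, sum_add_distrib]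

-- The `t`-th summand is `M + 1` times the contribution of the fibres whose set of cars preferring
-- one of the first `K` spots is a given `t`-subset of the other cars, resp. such a subset
-- together with the distinguished car.
theorem sum_range_choose_fiber_contributions (M K : ℕ) (x y : ℚ) :
    ∑ t ∈ range (M + 1), (M.choose t : ℚ) *
        ((M + 1) * ((K * x) ^ t * (t * y * (y + M) ^ (M - t)))
          + x ^ (t + 1) * (K * y * (y + K - 1) ^ t) * ((t + 1) * (M + 1) ^ (M - t))) =
      K * x * y * ((M + 1) * M * (K * x + y + M) ^ (M - 1)
        + M * (x * (y + K - 1)) * (x * (y + K - 1) + M + 1) ^ (M - 1)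
        + (x * (y + K - 1) + M + 1) ^ M) := by
  have h₁ := sum_range_choose_mul_mul_pow_mul_pow M (K * x) (y + M)
  have h₂ := sum_range_choose_mul_succ_mul_pow_mul_pow M (x * (y + K - 1)) (M + 1)
  calc _ = (M + 1) * y *
            ∑ t ∈ range (M + 1), (M.choose t * t : ℚ) * (K * x) ^ t * (y + M) ^ (M - t)
        + K * x * y * ∑ t ∈ range (M + 1),
            (M.choose t * (t + 1) : ℚ) * (x * (y + K - 1)) ^ t * (M + 1) ^ (M - t) := by
        rw [mul_sum, mul_sum, ← sum_add_distrib]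
        exact sum_congr rfl fun t _ => by simp only [mul_pow]; ring
    _ = _ := by
        rw [h₁, h₂]
        ring

section GeneratingFunction

variable {ι : Type*} [Fintype ι] [DecidableEq ι] {K M : ℕ}

-- The factor `n + 1` lets the formula cover `ι = ∅`, where there is exactly one parking function.
theorem card_parkingFunctions_mul_of_sum_pow {n : ℕ}
    (hlel : ∀ (j : ι) (z : ℚ), ∑ π ∈ parkingFunctions ι n, z ^ #{k | π k = π j} =
      (n + 1 - Fintype.card ι) * z * (z + n) ^ (Fintype.card ι - 1)) :
    (#(parkingFunctions ι n) : ℚ) * (n + 1) =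
      (n + 1 - Fintype.card ι) * (n + 1) ^ Fintype.card ι := by
  rcases isEmpty_or_nonempty ι with hι | ⟨⟨j⟩⟩
  · simp [card_parkingFunctions_of_isEmpty]
  · have h := hlel j 1
    simp only [one_pow, sum_const, nsmul_eq_mul, mul_one] at h
    obtain ⟨c, hc⟩ := Nat.exists_eq_add_one_of_ne_zero (Fintype.card_pos_iff.2 ⟨j⟩).ne'
    rw [h, hc, Nat.add_sub_cancel, pow_succ]
    ring

theorem mul_sum_parkingFunctions_pow_mul_pow (hι : Fintype.card ι = M + 1) (i₀ : ι) (x y : ℚ)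
    (hlel : ∀ T : Finset ι, T.Nonempty → ∀ (j : ↥Tᶜ) (z : ℚ),
      ∑ q ∈ parkingFunctions (↥Tᶜ) M, z ^ #{k | q k = q j} =
        (M + 1 - Fintype.card ↥Tᶜ) * z * (z + M) ^ (Fintype.card ↥Tᶜ - 1)) :
    (M + 1) * ∑ π ∈ parkingFunctions ι (K + M),
        x ^ #{i | (π i : ℕ) < K} * y ^ #{i | π i = π i₀} =
      K * x * y * ((M + 1) * M * (K * x + y + M) ^ (M - 1)
        + M * (x * (y + K - 1)) * (x * (y + K - 1) + M + 1) ^ (M - 1)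
        + (x * (y + K - 1) + M + 1) ^ M) := by
  have hcompl (T : Finset ι) : Fintype.card ↥Tᶜ + #T = M + 1 := by
    rw [Fintype.card_coe, card_compl_add_card, hι]
  have hcount (T : Finset ι) (hT : i₀ ∈ T) :
      (#(parkingFunctions (↥Tᶜ) M) : ℚ) * (M + 1) = #T * (M + 1) ^ (M + 1 - #T) := by
    have h : (Fintype.card ↥Tᶜ : ℚ) + #T = M + 1 := by exact_mod_cast hcompl T
    rw [card_parkingFunctions_mul_of_sum_pow (hlel T ⟨i₀, hT⟩),
      show M + 1 - #T = Fintype.card ↥Tᶜ by have := hcompl T; omega]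
    linear_combination -(M + 1 : ℚ) ^ Fintype.card ↥Tᶜ * h
  have hlow (T : Finset ι) (hT : i₀ ∉ T) :
      ∑ q ∈ parkingFunctions (↥Tᶜ) M, y ^ #{j | q j = q ⟨i₀, mem_compl.2 hT⟩} =
        #T * y * (y + M) ^ (M - #T) := by
    have h : (Fintype.card ↥Tᶜ : ℚ) + #T = M + 1 := by exact_mod_cast hcompl T
    rcases T.eq_empty_or_nonempty with rfl | hne
    · rw [parkingFunctions_eq_empty (by have := hcompl ∅; rw [card_empty] at this; omega)]
      simp
    · rw [hlel T hne, show Fintype.card ↥Tᶜ - 1 = M - #T by have := hcompl T; omega]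
      linear_combination -y * (y + M) ^ (M - #T) * h
  have hcard : #(univ.erase i₀) = M := by
    rw [card_erase_of_mem (mem_univ _), card_univ, hι, Nat.add_sub_cancel]
  rw [sum_parkingFunctions_eq_sum_glue hι.le, sum_eq_sum_powerset_erase i₀, mul_sum,
    sum_powerset, hcard, ← sum_range_choose_fiber_contributions]
  refine sum_congr rfl fun t _ => ?_
  rw [show M.choose t = #(powersetCard t (univ.erase i₀)) by rw [card_powersetCard, hcard],
    ← nsmul_eq_mul, ← sum_const]
  refine sum_congr rfl fun T hT => ?_
  obtain ⟨hsub, rfl⟩ := mem_powersetCard.1 hT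
  have hi₀ : i₀ ∉ T := fun h => notMem_erase i₀ univ (hsub h)
  have hc := hcount (insert i₀ T) (mem_insert_self i₀ T)
  rw [card_insert_of_notMem hi₀, Nat.add_sub_add_right] at hc
  rw [sum_glue_of_notMem T x y hi₀, sum_glue_of_mem _ x y (mem_insert_self i₀ T), hlow T hi₀,
    card_insert_of_notMem hi₀, Nat.add_sub_cancel]
  push_cast at hc ⊢
  linear_combination x ^ (#T + 1) * (K * y * (y + K - 1) ^ #T) * hc

theorem sum_parkingFunctions_pow_card_filter_eq (n : ℕ) (i₀ : ι) (y : ℚ)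
    (h : Fintype.card ι ≤ n + 1) :
    ∑ π ∈ parkingFunctions ι n, y ^ #{i | π i = π i₀} =
      (n + 1 - Fintype.card ι) * y * (y + n) ^ (Fintype.card ι - 1) := by
  induction hm : Fintype.card ι using Nat.strong_induction_on generalizing ι n y with
  | _ m ih =>
  rcases h.lt_or_eq with hlt | heq
  · obtain ⟨M, rfl⟩ : ∃ M, m = M + 1 :=
      Nat.exists_eq_add_one_of_ne_zero (hm ▸ Fintype.card_pos_iff.2 ⟨i₀⟩).ne'
    obtain ⟨K, rfl⟩ : ∃ K, n = K + M := ⟨n - M, by omega⟩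
    have key := mul_sum_parkingFunctions_pow_mul_pow (K := K) hm i₀ 1 y fun T hT j z =>
      ih _ (by rw [Fintype.card_coe, card_compl, hm]; have := hT.card_pos; omega) M j z
        (by rw [Fintype.card_coe, card_compl, hm]; omega) rfl
    simp only [one_pow, one_mul] at key
    apply mul_left_cancel₀ (show (M : ℚ) + 1 ≠ 0 by positivity)
    rw [key]
    push_cast
    rcases M with _ | M
    · simp
    · simp only [Nat.add_sub_cancel, pow_succ]
      ring
  · rw [parkingFunctions_eq_empty (by omega), sum_empty, ← hm, heq]
    push_cast
    ring

end GeneratingFunction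

theorem gf_slev_lel (m n : ℕ) (hm : 2 ≤ m) (hmn : m ≤ n) (x y : ℚ) :
    ∑ π ∈ pf m n,
        x ^ (Finset.univ.filter (fun i => (π i : ℕ) + 1 ≤ n - m + 1)).card *
        y ^ (Finset.univ.filter (fun i => π i = π ⟨0, by omega⟩)).card =
      ((n : ℚ) - m + 1) * x * y *
        ((m - 1) * (((n : ℚ) - m + 1) * x + y + m - 1) ^ (m - 2)
          + (x * y + ((n : ℚ) - m) * x + 1) * (x * y + ((n : ℚ) - m) * x + m) ^ (m - 2)) := by
  have hpf : pf m n = parkingFunctions (Fin m) n := by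
    ext π
    simp [pf]
  obtain ⟨M, rfl⟩ : ∃ M, m = M + 2 := ⟨m - 2, by omega⟩
  obtain ⟨K, rfl⟩ : ∃ K, n = K + (M + 1) := ⟨n - (M + 1), by omega⟩
  have key := mul_sum_parkingFunctions_pow_mul_pow (K := K) (M := M + 1) (Fintype.card_fin _)
    ⟨0, by omega⟩ x y fun T _ j z => sum_parkingFunctions_pow_card_filter_eq _ j z (by
      rw [Fintype.card_coe, card_compl, Fintype.card_fin]; omega)
  rw [hpf, show K + (M + 1) - (M + 2) + 1 = K by omega]
  simp_rw [Nat.add_one_le_iff]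
  apply mul_left_cancel₀ (show ((M + 1 : ℕ) : ℚ) + 1 ≠ 0 by positivity)
  rw [key]
  push_cast
  simp only [pow_succ]
  ring
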